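/- arXiv:2511.15045 — 3 statements merged into one kernel-verified Lean document; each statement's English description precedes it below -/
import Mathlib

section
/- Let (Ω, ℱ, P) be a probability space, 𝒢 ⊆ ℱ a sub-σ-algebra, T : Ω → ℕ measurable with T ≥ 1 a.s., t₀ ≥ 1, Δ : Ω → {0,1} measurable with π := E[Δ ∣ 𝒢] > 0 a.s., and suppose Δ is conditionally independent of T given 𝒢 (CAR). Assume E[Δ·1_{T≥s} ∣ 𝒢] > 0 a.s. for each s ∈ {1,…,t₀}, and define λ_Δ(s) := E[Δ·1_{T=s} ∣ 𝒢] / E[Δ·1_{T≥s} ∣ 𝒢]. Then the marginal survival probability is identified by the plug-in representation P(T > t₀) = E[ ∏_{s=1}^{t₀} (1 − λ_Δ(s)) ]. -/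
open MeasureTheory Finset

lemma tele_aux (a : ℕ → ℝ) : ∀ n : ℕ, (∀ s ∈ Finset.Icc 1 n, a s ≠ 0) → a 1 ≠ 0 →
    ∏ s ∈ Finset.Icc 1 n, a (s+1) / a s = a (n+1) / a 1 := by
  intro n
  induction n with
  | zero => intro _ h1; simp [div_self h1]
  | succ n ih =>
    intro h h1
    rw [Finset.prod_Icc_succ_top (Nat.le_add_left 1 n),
      ih (fun s hs => h s (Finset.mem_Icc.mpr ⟨(Finset.mem_Icc.mp hs).1,
        le_trans (Finset.mem_Icc.mp hs).2 (Nat.le_succ n)⟩)) h1]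
    have hne : a (n+1) ≠ 0 := h (n+1) (Finset.mem_Icc.mpr ⟨Nat.le_add_left 1 n, le_refl _⟩)
    field_simp

/-- Identification of the marginal survival probability by the plug-in representation:
under CAR, with `λ_Δ(s) = E[Δ·1_{T=s} ∣ mG] / E[Δ·1_{T≥s} ∣ mG]`, the survival
probability satisfies `P(T > t₀) = E[ ∏_{s=1}^{t₀} (1 − λ_Δ(s)) ]`. -/
theorem survival_plugin_identification
    {Ω : Type*} (mG : MeasurableSpace Ω) {mF : MeasurableSpace Ω} (μ : Measure Ω) [IsProbabilityMeasure μ]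
    (hmG : mG ≤ mF)
    (T : Ω → ℕ) (hT : Measurable T) (hT1 : ∀ᵐ ω ∂μ, 1 ≤ T ω)
    (t₀ : ℕ) (ht₀ : 1 ≤ t₀)
    (Δ : Ω → ℝ) (hΔ : Measurable Δ) (hΔ01 : ∀ ω, Δ ω = 0 ∨ Δ ω = 1)
    (hπ : ∀ᵐ ω ∂μ, 0 < (μ[Δ | mG]) ω)
    (hCAR : ∀ g : ℕ → ℝ, (∃ C : ℝ, ∀ n, |g n| ≤ C) →
      (μ[(fun ω => Δ ω * g (T ω)) | mG]) =ᵐ[μ]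
        fun ω => (μ[Δ | mG]) ω * (μ[(fun ω' => g (T ω')) | mG]) ω)
    (hrisk : ∀ s ∈ Finset.Icc 1 t₀,
      ∀ᵐ ω ∂μ, 0 < (μ[(fun ω' => Δ ω' * (if s ≤ T ω' then (1 : ℝ) else 0)) | mG]) ω)
    (lamΔ : ℕ → Ω → ℝ)
    (hlamΔ : ∀ s ∈ Finset.Icc 1 t₀, ∀ ω,
      lamΔ s ω = (μ[(fun ω' => Δ ω' * (if T ω' = s then (1 : ℝ) else 0)) | mG]) ω /
        (μ[(fun ω' => Δ ω' * (if s ≤ T ω' then (1 : ℝ) else 0)) | mG]) ω) :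
    (μ {ω | t₀ < T ω}).toReal = ∫ ω, ∏ s ∈ Finset.Icc 1 t₀, (1 - lamΔ s ω) ∂μ := by
  classical
  have hbd : ∀ (g : Ω → ℝ), Measurable[mF] g → (∀ ω, |g ω| ≤ 1) → Integrable g μ := by
    intro g hg hb
    exact (integrable_const (1:ℝ)).mono' (hg.aestronglyMeasurable (μ := μ))
      (Filter.Eventually.of_forall (fun ω => by simpa using hb ω))
  have hmge : ∀ s, Measurable[mF] (fun ω => if s ≤ T ω then (1:ℝ) else 0) := fun s =>
    (((measurable_from_top (f := fun n => if s ≤ n then (1:ℝ) else 0)).comp hT))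
  have hmeq : ∀ s, Measurable[mF] (fun ω => if T ω = s then (1:ℝ) else 0) := fun s =>
    (((measurable_from_top (f := fun n => if n = s then (1:ℝ) else 0)).comp hT))
  have hige : ∀ s, Integrable (fun ω => if s ≤ T ω then (1:ℝ) else 0) μ := fun s =>
    hbd _ (hmge s) (fun ω => by split <;> norm_num)
  have hieq : ∀ s, Integrable (fun ω => if T ω = s then (1:ℝ) else 0) μ := fun s =>
    hbd _ (hmeq s) (fun ω => by split <;> norm_num)
  set π : Ω → ℝ := μ[Δ | mG] with hπdef
  set F : ℕ → Ω → ℝ := fun s => μ[(fun ω => if s ≤ T ω then (1:ℝ) else 0) | mG] with hFdef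
  set E : ℕ → Ω → ℝ := fun s => μ[(fun ω => if T ω = s then (1:ℝ) else 0) | mG] with hEdef
  have hA : ∀ s, (μ[(fun ω => Δ ω * (if s ≤ T ω then (1:ℝ) else 0)) | mG]) =ᵐ[μ]
      fun ω => π ω * F s ω :=
    fun s => hCAR (fun n => if s ≤ n then 1 else 0) ⟨1, fun n => by show |ite _ (1:ℝ) 0| ≤ 1; split <;> norm_num⟩
  have hB : ∀ s, (μ[(fun ω => Δ ω * (if T ω = s then (1:ℝ) else 0)) | mG]) =ᵐ[μ]
      fun ω => π ω * E s ω :=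
    fun s => hCAR (fun n => if n = s then 1 else 0) ⟨1, fun n => by show |ite _ (1:ℝ) 0| ≤ 1; split <;> norm_num⟩
  have hFE : ∀ s, (fun ω => F s ω - E s ω) =ᵐ[μ] F (s+1) := by
    intro s
    have h1 : (fun ω => if s ≤ T ω then (1:ℝ) else 0) - (fun ω => if T ω = s then (1:ℝ) else 0)
        = fun ω => if s+1 ≤ T ω then (1:ℝ) else 0 := by
      funext ω
      simp only [Pi.sub_apply]
      by_cases h1 : T ω = s
      · simp [h1]
      · by_cases h2 : s ≤ T ω
        · have h3 : s + 1 ≤ T ω := by omega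
          simp [h1, h2, h3]
        · have h3 : ¬ (s + 1 ≤ T ω) := by omega
          simp [h1, h2, h3]
    have h2 := condExp_sub (m := mG) (hige s) (hieq s)
    rw [h1] at h2
    exact h2.symm
  have hF1 : F 1 =ᵐ[μ] fun _ => (1:ℝ) := by
    have h1 : (fun ω => if 1 ≤ T ω then (1:ℝ) else 0) =ᵐ[μ] fun _ => (1:ℝ) :=
      hT1.mono fun ω h => by simp [h]
    exact (condExp_congr_ae h1).trans (by rw [condExp_const hmG])
  have key : ∀ᵐ ω ∂μ, ∏ s ∈ Finset.Icc 1 t₀, (1 - lamΔ s ω) = F (t₀+1) ω := by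
    have hall : ∀ᵐ ω ∂μ, ∀ s ∈ Finset.Icc 1 t₀,
        ((μ[(fun ω' => Δ ω' * (if s ≤ T ω' then (1:ℝ) else 0)) | mG]) ω = π ω * F s ω ∧
         (μ[(fun ω' => Δ ω' * (if T ω' = s then (1:ℝ) else 0)) | mG]) ω = π ω * E s ω ∧
         0 < (μ[(fun ω' => Δ ω' * (if s ≤ T ω' then (1:ℝ) else 0)) | mG]) ω ∧
         F s ω - E s ω = F (s+1) ω) := by
      rw [Filter.eventually_all_finset]
      intro s hs
      filter_upwards [hA s, hB s, hrisk s hs, hFE s] with ω h1 h2 h3 h4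
      exact ⟨h1, h2, h3, h4⟩
    filter_upwards [hall, hπ, hF1] with ω hω hπω hF1ω
    have hFpos : ∀ s ∈ Finset.Icc 1 t₀, 0 < F s ω := by
      intro s hs
      obtain ⟨h1, h2, h3, h4⟩ := hω s hs
      nlinarith [h1, h3]
    have hstep : ∀ s ∈ Finset.Icc 1 t₀, 1 - lamΔ s ω = F (s+1) ω / F s ω := by
      intro s hs
      obtain ⟨h1, h2, h3, h4⟩ := hω s hs
      have hFs := hFpos s hs
      rw [hlamΔ s hs ω, h1, h2, mul_div_mul_left _ _ (ne_of_gt hπω)]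
      field_simp
      linarith [h4]
    rw [Finset.prod_congr rfl hstep]
    have ht := tele_aux (fun s => F s ω) t₀ (fun s hs => ne_of_gt (hFpos s hs))
      (by show F 1 ω ≠ 0; rw [hF1ω]; norm_num)
    simpa [hF1ω] using ht
  have hms : MeasurableSet[mF] {ω | t₀ < T ω} := hT measurableSet_Ioi
  have hind : ∫ ω, (if t₀+1 ≤ T ω then (1:ℝ) else 0) ∂μ
      = ∫ ω, ({ω | t₀ < T ω} : Set Ω).indicator (1 : Ω → ℝ) ω ∂μ :=
    integral_congr_ae (Filter.Eventually.of_forall fun ω => by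
      simp only [Set.indicator_apply, Set.mem_setOf_eq, Pi.one_apply, Nat.lt_iff_add_one_le])
  calc (μ {ω | t₀ < T ω}).toReal
      = ∫ ω, (if t₀+1 ≤ T ω then (1:ℝ) else 0) ∂μ := by
        rw [hind]; exact (@integral_indicator_one Ω mF μ _ hms).symm
    _ = ∫ ω, F (t₀+1) ω ∂μ := (integral_condExp hmG).symm
    _ = ∫ ω, ∏ s ∈ Finset.Icc 1 t₀, (1 - lamΔ s ω) ∂μ := (integral_congr_ae key).symm
end

section
/- Let (Ω, ℱ, P) be a probability space, 𝒢 ⊆ ℱ a sub-σ-algebra, T : Ω → ℕ measurable with T ≥ 1 a.s., t₀ ≥ 1, and Δ : Ω → {0,1} measurable with π := E[Δ ∣ 𝒢] ≥ c a.s. for some c > 0 and Δ conditionally independent of T given 𝒢 (CAR). For s ∈ {1,…,t₀} let λ(s) be the 𝒢-conditional hazard of T at s (i.e. E[1_{T=s} ∣ 𝒢] = λ(s)·E[1_{T≥s} ∣ 𝒢] a.s. with E[1_{T≥s} ∣ 𝒢] > 0 a.s.). Define the efficient influence function D* := Σ_{t=1}^{t₀} (Δ/π)·1_{T≥t}·(∏_{s=t+1}^{t₀}(1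 − λ(s)))·(1_{T=t} − λ(t)) + ∏_{s=1}^{t₀}(1 − λ(s)) − P(T > t₀). Then E[D*] = 0. -/
open MeasureTheory Finset

private lemma integral_indicator_one' {Ω : Type*} {m : MeasurableSpace Ω} (μ : Measure Ω)
    {s : Set Ω} (hs : MeasurableSet s) :
    ∫ ω, s.indicator (fun _ => (1 : ℝ)) ω ∂μ = (μ s).toReal := by
  rw [integral_indicator_const (1 : ℝ) hs, smul_eq_mul, mul_one]; rfl

/-- The efficient influence function of the fixed follow-up TMLE has mean zero:
`E[D*] = 0` where
`D* = Σ_{t=1}^{t₀} (Δ/π)·1_{T≥t}·(∏_{s=t+1}^{t₀}(1−λ(s)))·(1_{T=t} − λ(t))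
      + ∏_{s=1}^{t₀}(1−λ(s)) − P(T > t₀)`. -/
theorem eif_mean_zero
    {Ω : Type*} (mG : MeasurableSpace Ω) {mF : MeasurableSpace Ω} (μ : Measure Ω) [IsProbabilityMeasure μ]
    (hmG : mG ≤ mF)
    (T : Ω → ℕ) (hT : Measurable T) (hT1 : ∀ᵐ ω ∂μ, 1 ≤ T ω)
    (t₀ : ℕ) (ht₀ : 1 ≤ t₀)
    (Δ : Ω → ℝ) (hΔ : Measurable Δ) (hΔ01 : ∀ ω, Δ ω = 0 ∨ Δ ω = 1)
    (c : ℝ) (hc : 0 < c) (hπ : ∀ᵐ ω ∂μ, c ≤ (μ[Δ | mG]) ω)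
    (hCAR : ∀ g : ℕ → ℝ, (∃ C : ℝ, ∀ n, |g n| ≤ C) →
      (μ[(fun ω => Δ ω * g (T ω)) | mG]) =ᵐ[μ]
        fun ω => (μ[Δ | mG]) ω * (μ[(fun ω' => g (T ω')) | mG]) ω)
    (lam : ℕ → Ω → ℝ)
    (hlam_meas : ∀ s ∈ Finset.Icc 1 t₀, Measurable[mG] (lam s))
    (hlam01 : ∀ s ∈ Finset.Icc 1 t₀, ∀ ω, lam s ω ∈ Set.Icc (0 : ℝ) 1)
    (hrisk : ∀ s ∈ Finset.Icc 1 t₀,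
      ∀ᵐ ω ∂μ, 0 < (μ[(fun ω' => if s ≤ T ω' then (1 : ℝ) else 0) | mG]) ω)
    (hhaz : ∀ s ∈ Finset.Icc 1 t₀,
      (μ[(fun ω' => if T ω' = s then (1 : ℝ) else 0) | mG]) =ᵐ[μ]
        fun ω => lam s ω * (μ[(fun ω' => if s ≤ T ω' then (1 : ℝ) else 0) | mG]) ω)
    (Dstar : Ω → ℝ)
    (hDstar : ∀ ω, Dstar ω =
      (∑ t ∈ Finset.Icc 1 t₀,
        (Δ ω / (μ[Δ | mG]) ω) * (if t ≤ T ω then (1 : ℝ) else 0) *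
          (∏ s ∈ Finset.Icc (t + 1) t₀, (1 - lam s ω)) *
          ((if T ω = t then (1 : ℝ) else 0) - lam t ω))
      + ∏ s ∈ Finset.Icc 1 t₀, (1 - lam s ω)
      - (μ {ω' | t₀ < T ω'}).toReal) :
    ∫ ω, Dstar ω ∂μ = 0 := by
  classical
  have hπG : Measurable[mG] (μ[Δ | mG]) := stronglyMeasurable_condExp.measurable
  have hTF : Measurable[mF] T := hT
  have hΔF : Measurable[mF] Δ := hΔ
  have hπF : Measurable[mF] (μ[Δ | mG]) := hπG.mono hmG le_rfl
  have hΔ1 : ∀ ω, |Δ ω| ≤ 1 := fun ω => by rcases hΔ01 ω with h | h <;> simp [h]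
  -- generic integrability from an a.e. bound
  have hint : ∀ {f : Ω → ℝ} (_ : AEStronglyMeasurable[mF] f μ) (C : ℝ)
      (_ : ∀ᵐ ω ∂μ, |f ω| ≤ C), Integrable f μ := by
    intro f hf C h
    exact (memLp_top_of_bound hf C (by simpa [Real.norm_eq_abs] using h)).integrable le_top
  -- measurability of indicators
  have hiGe : ∀ t : ℕ, Measurable[mF] (fun ω => if t ≤ T ω then (1 : ℝ) else 0) := by
    intro t
    exact Measurable.ite (hTF measurableSet_Ici) measurable_const measurable_const
  have hiEq : ∀ t : ℕ, Measurable[mF] (fun ω => if T ω = t then (1 : ℝ) else 0) := by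
    intro t
    exact Measurable.ite (hTF (measurableSet_singleton t)) measurable_const measurable_const
  have hiGe1 : ∀ (t : ℕ) (ω : Ω), |(if t ≤ T ω then (1 : ℝ) else 0)| ≤ 1 := by
    intro t ω; split <;> norm_num
  have hiEq1 : ∀ (t : ℕ) (ω : Ω), |(if T ω = t then (1 : ℝ) else 0)| ≤ 1 := by
    intro t ω; split <;> norm_num
  have hiGeInt : ∀ t : ℕ, Integrable (fun ω => if t ≤ T ω then (1 : ℝ) else 0) μ :=
    fun t => hint (hiGe t).aestronglyMeasurable 1 (Filter.Eventually.of_forall (hiGe1 t))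
  have hiEqInt : ∀ t : ℕ, Integrable (fun ω => if T ω = t then (1 : ℝ) else 0) μ :=
    fun t => hint (hiEq t).aestronglyMeasurable 1 (Filter.Eventually.of_forall (hiEq1 t))
  -- products of (1 - lam s)
  have hProdG : ∀ a : ℕ, 1 ≤ a →
      Measurable[mG] (fun ω => ∏ s ∈ Finset.Icc a t₀, (1 - lam s ω)) := by
    intro a ha
    exact Finset.measurable_prod _ fun s hs =>
      measurable_const.sub (hlam_meas s (Finset.mem_Icc.mpr
        ⟨le_trans ha (Finset.mem_Icc.mp hs).1, (Finset.mem_Icc.mp hs).2⟩))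
  have hProd01 : ∀ a : ℕ, 1 ≤ a → ∀ ω,
      (0 : ℝ) ≤ (∏ s ∈ Finset.Icc a t₀, (1 - lam s ω)) ∧
      (∏ s ∈ Finset.Icc a t₀, (1 - lam s ω)) ≤ 1 := by
    intro a ha ω
    have hmem : ∀ s ∈ Finset.Icc a t₀, s ∈ Finset.Icc 1 t₀ := fun s hs =>
      Finset.mem_Icc.mpr ⟨le_trans ha (Finset.mem_Icc.mp hs).1, (Finset.mem_Icc.mp hs).2⟩
    constructor
    · exact Finset.prod_nonneg fun s hs => by
        have := (hlam01 s (hmem s hs) ω).2; linarith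
    · exact Finset.prod_le_one
        (fun s hs => by have := (hlam01 s (hmem s hs) ω).2; linarith)
        (fun s hs => by have := (hlam01 s (hmem s hs) ω).1; linarith)
  -- Step 1: each summand has zero expectation
  have hterm : ∀ t ∈ Finset.Icc 1 t₀,
      ∫ ω, ((Δ ω / (μ[Δ | mG]) ω) * (if t ≤ T ω then (1 : ℝ) else 0) *
          (∏ s ∈ Finset.Icc (t + 1) t₀, (1 - lam s ω)) *
          ((if T ω = t then (1 : ℝ) else 0) - lam t ω)) ∂μ = 0 := by
    intro t ht
    obtain ⟨ht1, ht2⟩ := Finset.mem_Icc.mp ht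
    have hAmG : Measurable[mG]
        (fun ω => (∏ s ∈ Finset.Icc (t + 1) t₀, (1 - lam s ω)) / (μ[Δ | mG]) ω) :=
      (hProdG (t + 1) (by omega)).div hπG
    have hAF : Measurable[mF]
        (fun ω => (∏ s ∈ Finset.Icc (t + 1) t₀, (1 - lam s ω)) / (μ[Δ | mG]) ω) :=
      hAmG.mono hmG le_rfl
    have hAbd : ∀ᵐ ω ∂μ,
        |(∏ s ∈ Finset.Icc (t + 1) t₀, (1 - lam s ω)) / (μ[Δ | mG]) ω| ≤ 1 / c := by
      filter_upwards [hπ] with ω hω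
      have h0 : (0 : ℝ) < (μ[Δ | mG]) ω := lt_of_lt_of_le hc hω
      have hP := hProd01 (t + 1) (by omega) ω
      rw [abs_div, abs_of_pos h0]
      exact div_le_div₀ zero_le_one (abs_le.mpr ⟨by linarith [hP.1], hP.2⟩) hc hω
    have hB1int : Integrable (fun ω => Δ ω * (if T ω = t then (1 : ℝ) else 0)) μ := by
      refine hint ((hΔF.mul (hiEq t)).aestronglyMeasurable) 1 (Filter.Eventually.of_forall ?_)
      intro ω; rw [abs_mul]
      exact mul_le_one₀ (hΔ1 ω) (abs_nonneg _) (hiEq1 t ω)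
    have hB2int : Integrable (fun ω => Δ ω * (if t ≤ T ω then (1 : ℝ) else 0)) μ := by
      refine hint ((hΔF.mul (hiGe t)).aestronglyMeasurable) 1 (Filter.Eventually.of_forall ?_)
      intro ω; rw [abs_mul]
      exact mul_le_one₀ (hΔ1 ω) (abs_nonneg _) (hiGe1 t ω)
    have hXint : Integrable (fun ω =>
        ((∏ s ∈ Finset.Icc (t + 1) t₀, (1 - lam s ω)) / (μ[Δ | mG]) ω) *
          (Δ ω * (if T ω = t then (1 : ℝ) else 0))) μ := by
      refine hint ((hAF.mul (hΔF.mul (hiEq t))).aestronglyMeasurable) (1 / c) ?_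
      filter_upwards [hAbd] with ω hA
      rw [abs_mul]
      calc |(∏ s ∈ Finset.Icc (t + 1) t₀, (1 - lam s ω)) / (μ[Δ | mG]) ω| *
            |Δ ω * (if T ω = t then (1 : ℝ) else 0)|
          ≤ (1 / c) * 1 := by
            refine mul_le_mul hA ?_ (abs_nonneg _) (by positivity)
            rw [abs_mul]; exact mul_le_one₀ (hΔ1 ω) (abs_nonneg _) (hiEq1 t ω)
        _ = 1 / c := mul_one _
    have hYint : Integrable (fun ω =>
        (((∏ s ∈ Finset.Icc (t + 1) t₀, (1 - lam s ω)) / (μ[Δ | mG]) ω) * lam t ω) *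
          (Δ ω * (if t ≤ T ω then (1 : ℝ) else 0))) μ := by
      refine hint (((hAF.mul ((hlam_meas t ht).mono hmG le_rfl)).mul
        (hΔF.mul (hiGe t))).aestronglyMeasurable) (1 / c) ?_
      filter_upwards [hAbd] with ω hA
      have hl := hlam01 t ht ω
      rw [abs_mul, abs_mul]
      calc |(∏ s ∈ Finset.Icc (t + 1) t₀, (1 - lam s ω)) / (μ[Δ | mG]) ω| * |lam t ω| *
            |Δ ω * (if t ≤ T ω then (1 : ℝ) else 0)|
          ≤ ((1 / c) * 1) * 1 := by
            refine mul_le_mul (mul_le_mul hA ?_ (abs_nonneg _) (by positivity)) ?_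
              (abs_nonneg _) (by positivity)
            · exact abs_le.mpr ⟨by linarith [hl.1], hl.2⟩
            · rw [abs_mul]; exact mul_le_one₀ (hΔ1 ω) (abs_nonneg _) (hiGe1 t ω)
        _ = 1 / c := by ring
    -- conditional expectation of the two pieces
    have hCAR1 := hCAR (fun n => if n = t then (1 : ℝ) else 0)
      ⟨1, fun n => by by_cases h : n = t <;> simp [h]⟩
    have hCAR2 := hCAR (fun n => if t ≤ n then (1 : ℝ) else 0)
      ⟨1, fun n => by by_cases h : t ≤ n <;> simp [h]⟩
    have hX' : (μ[(fun ω =>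
        ((∏ s ∈ Finset.Icc (t + 1) t₀, (1 - lam s ω)) / (μ[Δ | mG]) ω) *
          (Δ ω * (if T ω = t then (1 : ℝ) else 0))) | mG]) =ᵐ[μ]
        fun ω => ((∏ s ∈ Finset.Icc (t + 1) t₀, (1 - lam s ω)) / (μ[Δ | mG]) ω) *
          ((μ[Δ | mG]) ω * (μ[(fun ω' => if T ω' = t then (1 : ℝ) else 0) | mG]) ω) := by
      refine (condExp_mul_of_stronglyMeasurable_left hAmG.stronglyMeasurable hXint hB1int).trans ?_
      filter_upwards [hCAR1] with ω h
      simp only [Pi.mul_apply]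
      rw [h]
    have hY' : (μ[(fun ω =>
        (((∏ s ∈ Finset.Icc (t + 1) t₀, (1 - lam s ω)) / (μ[Δ | mG]) ω) * lam t ω) *
          (Δ ω * (if t ≤ T ω then (1 : ℝ) else 0))) | mG]) =ᵐ[μ]
        fun ω => (((∏ s ∈ Finset.Icc (t + 1) t₀, (1 - lam s ω)) / (μ[Δ | mG]) ω) * lam t ω) *
          ((μ[Δ | mG]) ω * (μ[(fun ω' => if t ≤ T ω' then (1 : ℝ) else 0) | mG]) ω) := by
      refine (condExp_mul_of_stronglyMeasurable_left (hAmG.mul (hlam_meas t ht)).stronglyMeasurable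
        hYint hB2int).trans ?_
      filter_upwards [hCAR2] with ω h
      simp only [Pi.mul_apply]
      rw [h]
    have hX'int : Integrable (fun ω =>
        ((∏ s ∈ Finset.Icc (t + 1) t₀, (1 - lam s ω)) / (μ[Δ | mG]) ω) *
          ((μ[Δ | mG]) ω * (μ[(fun ω' => if T ω' = t then (1 : ℝ) else 0) | mG]) ω)) μ :=
      integrable_condExp.congr hX'
    have hY'int : Integrable (fun ω =>
        (((∏ s ∈ Finset.Icc (t + 1) t₀, (1 - lam s ω)) / (μ[Δ | mG]) ω) * lam t ω) *
          ((μ[Δ | mG]) ω * (μ[(fun ω' => if t ≤ T ω' then (1 : ℝ) else 0) | mG]) ω)) μ :=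
      integrable_condExp.congr hY'
    -- decompose the summand pointwise
    have hdecomp : ∀ ω,
        (Δ ω / (μ[Δ | mG]) ω) * (if t ≤ T ω then (1 : ℝ) else 0) *
          (∏ s ∈ Finset.Icc (t + 1) t₀, (1 - lam s ω)) *
          ((if T ω = t then (1 : ℝ) else 0) - lam t ω)
        = ((∏ s ∈ Finset.Icc (t + 1) t₀, (1 - lam s ω)) / (μ[Δ | mG]) ω) *
            (Δ ω * (if T ω = t then (1 : ℝ) else 0))
          - (((∏ s ∈ Finset.Icc (t + 1) t₀, (1 - lam s ω)) / (μ[Δ | mG]) ω) * lam t ω) *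
            (Δ ω * (if t ≤ T ω then (1 : ℝ) else 0)) := by
      intro ω
      by_cases h1 : T ω = t
      · have h2 : t ≤ T ω := le_of_eq h1.symm
        rw [if_pos h1, if_pos h2]
        ring
      · by_cases h2 : t ≤ T ω
        · rw [if_neg h1, if_pos h2]
          ring
        · rw [if_neg h1, if_neg h2]
          ring
    calc ∫ ω, ((Δ ω / (μ[Δ | mG]) ω) * (if t ≤ T ω then (1 : ℝ) else 0) *
            (∏ s ∈ Finset.Icc (t + 1) t₀, (1 - lam s ω)) *
            ((if T ω = t then (1 : ℝ) else 0) - lam t ω)) ∂μ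
        = ∫ ω, (((∏ s ∈ Finset.Icc (t + 1) t₀, (1 - lam s ω)) / (μ[Δ | mG]) ω) *
              (Δ ω * (if T ω = t then (1 : ℝ) else 0))
            - (((∏ s ∈ Finset.Icc (t + 1) t₀, (1 - lam s ω)) / (μ[Δ | mG]) ω) * lam t ω) *
              (Δ ω * (if t ≤ T ω then (1 : ℝ) else 0))) ∂μ :=
          integral_congr_ae (Filter.Eventually.of_forall hdecomp)
      _ = (∫ ω, (((∏ s ∈ Finset.Icc (t + 1) t₀, (1 - lam s ω)) / (μ[Δ | mG]) ω) *
              (Δ ω * (if T ω = t then (1 : ℝ) else 0))) ∂μ)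
          - ∫ ω, ((((∏ s ∈ Finset.Icc (t + 1) t₀, (1 - lam s ω)) / (μ[Δ | mG]) ω) * lam t ω) *
              (Δ ω * (if t ≤ T ω then (1 : ℝ) else 0))) ∂μ := integral_sub hXint hYint
      _ = (∫ ω, (((∏ s ∈ Finset.Icc (t + 1) t₀, (1 - lam s ω)) / (μ[Δ | mG]) ω) *
              ((μ[Δ | mG]) ω * (μ[(fun ω' => if T ω' = t then (1 : ℝ) else 0) | mG]) ω)) ∂μ)
          - ∫ ω, ((((∏ s ∈ Finset.Icc (t + 1) t₀, (1 - lam s ω)) / (μ[Δ | mG]) ω) * lam t ω) *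
              ((μ[Δ | mG]) ω * (μ[(fun ω' => if t ≤ T ω' then (1 : ℝ) else 0) | mG]) ω)) ∂μ := by
          have e1 := (integral_condExp (μ := μ) hmG (f := fun ω =>
            ((∏ s ∈ Finset.Icc (t + 1) t₀, (1 - lam s ω)) / (μ[Δ | mG]) ω) *
              (Δ ω * (if T ω = t then (1 : ℝ) else 0)))).symm.trans (integral_congr_ae hX')
          have e2 := (integral_condExp (μ := μ) hmG (f := fun ω =>
            (((∏ s ∈ Finset.Icc (t + 1) t₀, (1 - lam s ω)) / (μ[Δ | mG]) ω) * lam t ω) *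
              (Δ ω * (if t ≤ T ω then (1 : ℝ) else 0)))).symm.trans (integral_congr_ae hY')
          rw [e1, e2]
      _ = ∫ ω, ((((∏ s ∈ Finset.Icc (t + 1) t₀, (1 - lam s ω)) / (μ[Δ | mG]) ω) *
              ((μ[Δ | mG]) ω * (μ[(fun ω' => if T ω' = t then (1 : ℝ) else 0) | mG]) ω))
            - ((((∏ s ∈ Finset.Icc (t + 1) t₀, (1 - lam s ω)) / (μ[Δ | mG]) ω) * lam t ω) *
              ((μ[Δ | mG]) ω * (μ[(fun ω' => if t ≤ T ω' then (1 : ℝ) else 0) | mG]) ω))) ∂μ :=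
          (integral_sub hX'int hY'int).symm
      _ = 0 := by
          refine integral_eq_zero_of_ae ?_
          filter_upwards [hhaz t ht] with ω h
          have h' : (μ[(fun ω' => if T ω' = t then (1 : ℝ) else 0) | mG]) ω
              = lam t ω * (μ[(fun ω' => if t ≤ T ω' then (1 : ℝ) else 0) | mG]) ω := h
          simp only [Pi.zero_apply]
          rw [h']
          ring
  -- Step 2: the survival product equals the conditional survival probability
  have hsurv : ∀ k : ℕ, k ≤ t₀ →
      (μ[(fun ω' => if k + 1 ≤ T ω' then (1 : ℝ) else 0) | mG]) =ᵐ[μ]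
        fun ω => ∏ s ∈ Finset.Icc 1 k, (1 - lam s ω) := by
    intro k
    induction k with
    | zero =>
      intro _
      have h1 : (fun ω' => if 0 + 1 ≤ T ω' then (1 : ℝ) else 0) =ᵐ[μ] fun _ => (1 : ℝ) := by
        filter_upwards [hT1] with ω hω
        simp [hω]
      refine ((condExp_congr_ae h1).trans ?_)
      rw [condExp_const hmG (1 : ℝ)]
      refine Filter.Eventually.of_forall fun ω => ?_
      show (1 : ℝ) = ∏ s ∈ Finset.Icc 1 0, (1 - lam s ω)
      rw [show Finset.Icc 1 0 = (∅ : Finset ℕ) from Finset.Icc_eq_empty (by omega),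
        Finset.prod_empty]
    | succ k ih =>
      intro hk1
      have ihh := ih (by omega)
      have hk' : k + 1 ∈ Finset.Icc 1 t₀ := Finset.mem_Icc.mpr ⟨by omega, hk1⟩
      have hsplit : (fun ω' => if k + 1 + 1 ≤ T ω' then (1 : ℝ) else 0)
          = (fun ω' => if k + 1 ≤ T ω' then (1 : ℝ) else 0)
            - (fun ω' => if T ω' = k + 1 then (1 : ℝ) else 0) := by
        funext ω
        simp only [Pi.sub_apply]
        by_cases h : k + 2 ≤ T ω
        · rw [if_pos h, if_pos (by omega), if_neg (by omega)]; ring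
        · rw [if_neg h]
          by_cases h2 : T ω = k + 1
          · rw [if_pos (by omega), if_pos h2]; ring
          · rw [if_neg (by omega), if_neg h2]; ring
      rw [hsplit]
      calc μ[((fun ω' => if k + 1 ≤ T ω' then (1 : ℝ) else 0)
              - fun ω' => if T ω' = k + 1 then (1 : ℝ) else 0) | mG]
          =ᵐ[μ] μ[(fun ω' => if k + 1 ≤ T ω' then (1 : ℝ) else 0) | mG]
            - μ[(fun ω' => if T ω' = k + 1 then (1 : ℝ) else 0) | mG] :=
            condExp_sub (hiGeInt (k + 1)) (hiEqInt (k + 1)) mG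
        _ =ᵐ[μ] fun ω => ∏ s ∈ Finset.Icc 1 (k + 1), (1 - lam s ω) := by
            filter_upwards [hhaz (k + 1) hk', ihh] with ω hh hi
            simp only [Pi.sub_apply]
            have hh' : (μ[(fun ω' => if T ω' = k + 1 then (1 : ℝ) else 0) | mG]) ω
                = lam (k + 1) ω *
                  (μ[(fun ω' => if k + 1 ≤ T ω' then (1 : ℝ) else 0) | mG]) ω := hh
            rw [hh', hi, Finset.prod_Icc_succ_top (by omega : 1 ≤ k + 1)]
            ring
  -- integrability of the pieces of Dstar
  have hfint : ∀ t ∈ Finset.Icc 1 t₀, Integrable (fun ω =>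
      (Δ ω / (μ[Δ | mG]) ω) * (if t ≤ T ω then (1 : ℝ) else 0) *
        (∏ s ∈ Finset.Icc (t + 1) t₀, (1 - lam s ω)) *
        ((if T ω = t then (1 : ℝ) else 0) - lam t ω)) μ := by
    intro t ht
    obtain ⟨ht1, ht2⟩ := Finset.mem_Icc.mp ht
    have hmeas : Measurable[mF] (fun ω =>
        (Δ ω / (μ[Δ | mG]) ω) * (if t ≤ T ω then (1 : ℝ) else 0) *
          (∏ s ∈ Finset.Icc (t + 1) t₀, (1 - lam s ω)) *
          ((if T ω = t then (1 : ℝ) else 0) - lam t ω)) :=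
      (((hΔF.div hπF).mul (hiGe t)).mul ((hProdG (t + 1) (by omega)).mono hmG le_rfl)).mul
        ((hiEq t).sub ((hlam_meas t ht).mono hmG le_rfl))
    refine hint hmeas.aestronglyMeasurable (1 / c * 2) ?_
    filter_upwards [hπ] with ω hω
    have h0 : (0 : ℝ) < (μ[Δ | mG]) ω := lt_of_lt_of_le hc hω
    have h1 : |Δ ω / (μ[Δ | mG]) ω| ≤ 1 / c := by
      rw [abs_div, abs_of_pos h0]
      exact div_le_div₀ zero_le_one (hΔ1 ω) hc hω
    have hP := hProd01 (t + 1) (by omega) ω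
    have h3 : |∏ s ∈ Finset.Icc (t + 1) t₀, (1 - lam s ω)| ≤ 1 :=
      abs_le.mpr ⟨by linarith [hP.1], hP.2⟩
    have hl := hlam01 t ht ω
    have h4 : |(if T ω = t then (1 : ℝ) else 0) - lam t ω| ≤ 2 :=
      (abs_sub _ _).trans (by
        have := hiEq1 t ω
        have hl' : |lam t ω| ≤ 1 := abs_le.mpr ⟨by linarith [hl.1], hl.2⟩
        linarith)
    rw [abs_mul, abs_mul, abs_mul]
    calc |Δ ω / (μ[Δ | mG]) ω| * |(if t ≤ T ω then (1 : ℝ) else 0)| *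
          |∏ s ∈ Finset.Icc (t + 1) t₀, (1 - lam s ω)| *
          |(if T ω = t then (1 : ℝ) else 0) - lam t ω|
        ≤ (1 / c) * 1 * 1 * 2 :=
          mul_le_mul (mul_le_mul (mul_le_mul h1 (hiGe1 t ω) (abs_nonneg _) (by positivity))
            h3 (abs_nonneg _) (by positivity)) h4 (abs_nonneg _) (by positivity)
      _ = 1 / c * 2 := by ring
  have hSint : Integrable (fun ω => ∑ t ∈ Finset.Icc 1 t₀,
      (Δ ω / (μ[Δ | mG]) ω) * (if t ≤ T ω then (1 : ℝ) else 0) *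
        (∏ s ∈ Finset.Icc (t + 1) t₀, (1 - lam s ω)) *
        ((if T ω = t then (1 : ℝ) else 0) - lam t ω)) μ :=
    integrable_finset_sum _ hfint
  have hPint : Integrable (fun ω => ∏ s ∈ Finset.Icc 1 t₀, (1 - lam s ω)) μ := by
    refine hint ((hProdG 1 le_rfl).mono hmG le_rfl).aestronglyMeasurable 1
      (Filter.Eventually.of_forall fun ω => ?_)
    have hP := hProd01 1 le_rfl ω
    exact abs_le.mpr ⟨by linarith [hP.1], hP.2⟩
  -- the expectation of the survival product is P(T > t₀)
  have hPeq : ∫ ω, (∏ s ∈ Finset.Icc 1 t₀, (1 - lam s ω)) ∂μ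
      = (μ {ω' | t₀ < T ω'}).toReal := by
    have h1 : ∫ ω, (∏ s ∈ Finset.Icc 1 t₀, (1 - lam s ω)) ∂μ
        = ∫ ω, (μ[(fun ω' => if t₀ + 1 ≤ T ω' then (1 : ℝ) else 0) | mG]) ω ∂μ :=
      (integral_congr_ae (hsurv t₀ le_rfl)).symm
    rw [h1, integral_condExp hmG]
    have h2 : (fun ω' => if t₀ + 1 ≤ T ω' then (1 : ℝ) else 0)
        = Set.indicator {ω' | t₀ < T ω'} (fun _ => (1 : ℝ)) := by
      funext ω
      by_cases h : t₀ + 1 ≤ T ω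
      · rw [if_pos h, Set.indicator_of_mem (by exact h)]
      · rw [if_neg h, Set.indicator_of_notMem (by exact h)]
    rw [h2, integral_indicator_one' μ (s := {ω' | t₀ < T ω'}) (hTF measurableSet_Ioi)]
  -- assemble everything
  have hDfun : Dstar = fun ω =>
      ((∑ t ∈ Finset.Icc 1 t₀,
        (Δ ω / (μ[Δ | mG]) ω) * (if t ≤ T ω then (1 : ℝ) else 0) *
          (∏ s ∈ Finset.Icc (t + 1) t₀, (1 - lam s ω)) *
          ((if T ω = t then (1 : ℝ) else 0) - lam t ω))
      + ∏ s ∈ Finset.Icc 1 t₀, (1 - lam s ω))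
      - (μ {ω' | t₀ < T ω'}).toReal := funext hDstar
  have hSPint : Integrable (fun ω =>
      (∑ t ∈ Finset.Icc 1 t₀,
        (Δ ω / (μ[Δ | mG]) ω) * (if t ≤ T ω then (1 : ℝ) else 0) *
          (∏ s ∈ Finset.Icc (t + 1) t₀, (1 - lam s ω)) *
          ((if T ω = t then (1 : ℝ) else 0) - lam t ω))
      + ∏ s ∈ Finset.Icc 1 t₀, (1 - lam s ω)) μ := hSint.add hPint
  rw [hDfun]
  rw [integral_sub hSPint (integrable_const _), integral_add hSint hPint,
    integral_finset_sum _ hfint, integral_const, Measure.real, measure_univ, ENNReal.toReal_one, one_smul,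
    hPeq, Finset.sum_congr rfl hterm, Finset.sum_const_zero]
  ring
end

section
/- Let (Ω, ℱ, P) be a probability space, ℱ₀ ⊆ ℱ₁ ⊆ … ⊆ ℱ_K ⊆ ℱ a finite filtration, and D a bounded real random variable. For each t ∈ {1,…,K}, let dA(t) : Ω → {0,1} be ℱ_t-measurable with λ(t) := E[dA(t) ∣ ℱ_{t−1}] satisfying c ≤ λ(t) ≤ 1 − c a.s. for some c > 0. Define f_t := E[D·dA(t) ∣ ℱ_{t−1}]/λ(t) − E[D·(1 − dA(t)) ∣ ℱ_{t−1}]/(1 − λ(t)), S := Σ_{t=1}^K f_t·(dA(t) − λ(t)), and D** := D − S. Then: (i) E[S] = 0, so E[D**] = E[D]; (ii) E[(D**)²] = E[D²] − E[S²]; and consequently (iii) Var(D**) ≤ Var(D). Thus estimating or targeting the censoring mechanism can only reduce (never increase) the asymptotic variance relative to using the known censoring weights. -/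
/-!
Write `λₜ = μ[dA t | F (t - 1)]` and `Tₜ = fₜ (dA t - λₜ)`, so that `S = ∑ₜ Tₜ`. Each `Tₜ` is an
`F (t - 1)`-measurable bounded coefficient times a martingale increment, hence `E[Tₜ] = 0`, and
`E[Tₜ Tₛ] = 0` for `t < s` because `Tₜ fₛ` is `F (s - 1)`-measurable. Conditioning on `F (t - 1)`,
`E[D (dA t - λₜ) | F (t - 1)] = fₜ λₜ (1 - λₜ)`, while `dA t ^ 2 = dA t` gives
`E[(dA t - λₜ) ^ 2 | F (t - 1)] = λₜ (1 - λₜ)`; so `E[D Tₜ] = E[Tₜ ^ 2]`, i.e. `Tₜ` is the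
projection of `D` on the score `dA t - λₜ`. Summing, `E[D S] = E[S ^ 2]`: `D - S` is orthogonal
to `S`, whence `E[(D - S) ^ 2] = E[D ^ 2] - E[S ^ 2]` and `Var (D - S) = Var D - E[S ^ 2]`.
-/

open MeasureTheory ProbabilityTheory
open scoped ENNReal

section

variable {Ω : Type*} {m mΩ : MeasurableSpace Ω} {μ : Measure Ω}

theorem MeasureTheory.Integrable.mul_of_top_right' {g X : Ω → ℝ} (hX : Integrable X μ)
    (hg : MemLp g ∞ μ) : Integrable (fun ω => g ω * X ω) μ :=
  hX.mul_of_top_right hg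

theorem memLp_top_of_zero_or_one {A : Ω → ℝ} (hA : AEStronglyMeasurable A μ)
    (hA01 : ∀ ω, A ω = 0 ∨ A ω = 1) : MemLp A ∞ μ :=
  memLp_top_of_bound hA 1 <| .of_forall fun ω => by rcases hA01 ω with h | h <;> simp [h]

theorem memLp_top_inv_of_le {c : ℝ} {l : Ω → ℝ} (hl : AEStronglyMeasurable l μ) (hc : 0 < c)
    (hcl : ∀ᵐ ω ∂μ, c ≤ l ω) : MemLp (fun ω => (l ω)⁻¹) ∞ μ :=
  memLp_top_of_bound hl.aemeasurable.inv.aestronglyMeasurable c⁻¹ <| hcl.mono fun ω h => by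
    rw [norm_inv, Real.norm_of_nonneg (hc.le.trans h)]
    exact inv_anti₀ hc h

theorem integral_mul_sum_eq_integral_sq_sum {ι : Type*} (s : Finset ι) {D : Ω → ℝ}
    {T : ι → Ω → ℝ} (hD : MemLp D 2 μ) (hT : ∀ i ∈ s, MemLp (T i) 2 μ)
    (horth : ∀ i ∈ s, ∀ j ∈ s, i ≠ j → ∫ ω, T i ω * T j ω ∂μ = 0)
    (hproj : ∀ i ∈ s, ∫ ω, D ω * T i ω ∂μ = ∫ ω, T i ω ^ 2 ∂μ) :
    ∫ ω, D ω * ∑ i ∈ s, T i ω ∂μ = ∫ ω, (∑ i ∈ s, T i ω) ^ 2 ∂μ := by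
  have hTT : ∀ i ∈ s, ∀ j ∈ s, Integrable (fun ω => T i ω * T j ω) μ := fun i hi j hj =>
    (hT i hi).integrable_mul (hT j hj)
  have hdiag : ∀ i ∈ s, ∑ j ∈ s, ∫ ω, T i ω * T j ω ∂μ = ∫ ω, T i ω ^ 2 ∂μ := fun i hi => by
    rw [Finset.sum_eq_single_of_mem i hi fun j hj hji => horth i hi j hj hji.symm]
    simp only [sq]
  calc ∫ ω, D ω * ∑ i ∈ s, T i ω ∂μ = ∑ i ∈ s, ∫ ω, D ω * T i ω ∂μ := by
        simp_rw [Finset.mul_sum]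
        exact integral_finsetSum s fun i hi => hD.integrable_mul (hT i hi)
    _ = ∑ i ∈ s, ∑ j ∈ s, ∫ ω, T i ω * T j ω ∂μ :=
        Finset.sum_congr rfl fun i hi => (hproj i hi).trans (hdiag i hi).symm
    _ = ∫ ω, (∑ i ∈ s, T i ω) ^ 2 ∂μ := by
        simp_rw [sq, Finset.sum_mul_sum]
        rw [integral_finsetSum s fun i hi => integrable_finsetSum s (hTT i hi)]
        exact Finset.sum_congr rfl fun i hi => (integral_finsetSum s (hTT i hi)).symm

theorem integral_sq_sub_eq_of_integral_mul_eq {D S : Ω → ℝ} (hD : MemLp D 2 μ)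
    (hS : MemLp S 2 μ) (h : ∫ ω, D ω * S ω ∂μ = ∫ ω, S ω ^ 2 ∂μ) :
    ∫ ω, (D ω - S ω) ^ 2 ∂μ = ∫ ω, D ω ^ 2 ∂μ - ∫ ω, S ω ^ 2 ∂μ := by
  have hDS : Integrable (fun ω => 2 * (D ω * S ω)) μ := (hD.integrable_mul hS).const_mul 2
  calc ∫ ω, (D ω - S ω) ^ 2 ∂μ = ∫ ω, (D ω ^ 2 - 2 * (D ω * S ω) + S ω ^ 2) ∂μ := by
        congr 1 with ω; ring
    _ = ∫ ω, D ω ^ 2 ∂μ - ∫ ω, S ω ^ 2 ∂μ := by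
        rw [integral_add (f := fun ω => D ω ^ 2 - 2 * (D ω * S ω))
          (hD.integrable_sq.sub hDS) hS.integrable_sq,
          integral_sub hD.integrable_sq hDS, integral_const_mul, h]
        ring

theorem variance_sub_eq_of_integral_mul_eq [IsProbabilityMeasure μ] {D S : Ω → ℝ}
    (hD : MemLp D 2 μ) (hS : MemLp S 2 μ) (hS0 : ∫ ω, S ω ∂μ = 0)
    (h : ∫ ω, D ω * S ω ∂μ = ∫ ω, S ω ^ 2 ∂μ) :
    variance (D - S) μ = variance D μ - ∫ ω, S ω ^ 2 ∂μ := by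
  rw [variance_eq_sub (hD.sub hS), variance_eq_sub hD]
  change ∫ ω, (D ω - S ω) ^ 2 ∂μ - (∫ ω, (D ω - S ω) ∂μ) ^ 2 = _
  rw [integral_sq_sub_eq_of_integral_mul_eq hD hS h,
    integral_sub (hD.integrable one_le_two) (hS.integrable one_le_two), hS0, sub_zero]
  simp only [Pi.pow_apply]
  ring

section CondExp

variable [IsFiniteMeasure μ]

theorem integral_mul_condExp (hm : m ≤ mΩ) {g X : Ω → ℝ} (hg : StronglyMeasurable[m] g)
    (hgb : MemLp g ∞ μ) (hX : Integrable X μ) :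
    ∫ ω, g ω * (μ[X|m]) ω ∂μ = ∫ ω, g ω * X ω ∂μ := by
  calc ∫ ω, g ω * (μ[X|m]) ω ∂μ = ∫ ω, (μ[g * X|m]) ω ∂μ :=
        integral_congr_ae
          (condExp_mul_of_stronglyMeasurable_left hg (hX.mul_of_top_right hgb) hX).symm
    _ = ∫ ω, g ω * X ω ∂μ := integral_condExp hm

theorem integral_mul_sub_condExp_eq_zero (hm : m ≤ mΩ) {g X : Ω → ℝ}
    (hg : StronglyMeasurable[m] g) (hgb : MemLp g ∞ μ) (hX : Integrable X μ) :
    ∫ ω, g ω * (X ω - (μ[X|m]) ω) ∂μ = 0 := by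
  simp_rw [mul_sub]
  rw [integral_sub (hX.mul_of_top_right' hgb) (integrable_condExp.mul_of_top_right' hgb),
    integral_mul_condExp hm hg hgb hX, sub_self]

theorem integral_mul_sub_condExp_mul_mul_sub_condExp_eq_zero {m₁ m₂ : MeasurableSpace Ω}
    (hm₁₂ : m₁ ≤ m₂) (hm₂ : m₂ ≤ mΩ) {g₁ g₂ X₁ X₂ : Ω → ℝ} (hg₁ : StronglyMeasurable[m₁] g₁)
    (hX₁ : StronglyMeasurable[m₂] X₁) (hg₂ : StronglyMeasurable[m₂] g₂) (hg₁b : MemLp g₁ ∞ μ)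
    (hX₁b : MemLp X₁ ∞ μ) (hg₂b : MemLp g₂ ∞ μ) (hX₂ : Integrable X₂ μ) :
    ∫ ω, g₁ ω * (X₁ ω - (μ[X₁|m₁]) ω) * (g₂ ω * (X₂ ω - (μ[X₂|m₂]) ω)) ∂μ = 0 := by
  have h₁ : StronglyMeasurable[m₂] (fun ω => g₁ ω * (X₁ ω - (μ[X₁|m₁]) ω) * g₂ ω) :=
    ((hg₁.mono hm₁₂).mul (hX₁.sub (stronglyMeasurable_condExp.mono hm₁₂))).mul hg₂
  have h₁b : MemLp (fun ω => g₁ ω * (X₁ ω - (μ[X₁|m₁]) ω) * g₂ ω) ∞ μ :=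
    hg₂b.mul' ((hX₁b.sub (hX₁b.condExp le_top)).mul' (r := ∞) hg₁b)
  simpa only [mul_assoc] using integral_mul_sub_condExp_eq_zero hm₂ h₁ h₁b hX₂

theorem integral_mul_sq_sub_condExp_of_zero_or_one (hm : m ≤ mΩ) {g A : Ω → ℝ}
    (hg : StronglyMeasurable[m] g) (hgb : MemLp g ∞ μ) (hA : MemLp A ∞ μ)
    (hA01 : ∀ ω, A ω = 0 ∨ A ω = 1) :
    ∫ ω, g ω * (A ω - (μ[A|m]) ω) ^ 2 ∂μ
      = ∫ ω, g ω * ((μ[A|m]) ω * (1 - (μ[A|m]) ω)) ∂μ := by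
  set l := μ[A|m]
  have hlb : MemLp l ∞ μ := hA.condExp le_top
  have hh : StronglyMeasurable[m] (fun ω => g ω * (1 - 2 * l ω)) := by
    have : StronglyMeasurable[m] l := stronglyMeasurable_condExp
    fun_prop
  have hhb : MemLp (fun ω => g ω * (1 - 2 * l ω)) ∞ μ :=
    ((memLp_const 1).sub (hlb.const_mul 2)).mul' hgb
  have hgll : Integrable (fun ω => g ω * l ω * l ω) μ :=
    (hlb.mul' (r := ∞) (hlb.mul' (r := ∞) hgb)).integrable le_top
  calc ∫ ω, g ω * (A ω - l ω) ^ 2 ∂μ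
      = ∫ ω, g ω * (1 - 2 * l ω) * A ω + g ω * l ω * l ω ∂μ := by
        congr 1 with ω
        rcases hA01 ω with h | h <;> rw [h] <;> ring
    _ = ∫ ω, g ω * (1 - 2 * l ω) * l ω + g ω * l ω * l ω ∂μ := by
        rw [integral_add ((hA.integrable le_top).mul_of_top_right' hhb) hgll,
          integral_add (integrable_condExp.mul_of_top_right' hhb) hgll,
          integral_mul_condExp hm hh hhb (hA.integrable le_top)]
    _ = ∫ ω, g ω * (l ω * (1 - l ω)) ∂μ := by
        congr 1 with ω; ring

theorem integral_mul_mul_sub_condExp (hm : m ≤ mΩ) {g D A : Ω → ℝ}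
    (hg : StronglyMeasurable[m] g) (hgb : MemLp g ∞ μ) (hD : MemLp D ∞ μ) (hA : MemLp A ∞ μ) :
    ∫ ω, g ω * (D ω * (A ω - (μ[A|m]) ω)) ∂μ
      = ∫ ω, g ω * ((1 - (μ[A|m]) ω) * (μ[fun ω' => D ω' * A ω'|m]) ω
          - (μ[A|m]) ω * (μ[fun ω' => D ω' * (1 - A ω')|m]) ω) ∂μ := by
  set l := μ[A|m]
  have hl : StronglyMeasurable[m] l := stronglyMeasurable_condExp
  have hlb : MemLp l ∞ μ := hA.condExp le_top
  have hDA : MemLp (fun ω => D ω * A ω) ∞ μ := hA.mul' hD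
  have hDA' : MemLp (fun ω => D ω * (1 - A ω)) ∞ μ := ((memLp_const 1).sub hA).mul' hD
  have h1 : MemLp (fun ω => g ω * (1 - l ω)) ∞ μ := ((memLp_const 1).sub hlb).mul' hgb
  have h2 : MemLp (fun ω => g ω * l ω) ∞ μ := hlb.mul' hgb
  calc ∫ ω, g ω * (D ω * (A ω - l ω)) ∂μ
      = ∫ ω, g ω * (1 - l ω) * (D ω * A ω) - g ω * l ω * (D ω * (1 - A ω)) ∂μ := by
        congr 1 with ω; ring
    _ = ∫ ω, g ω * (1 - l ω) * (μ[fun ω' => D ω' * A ω'|m]) ω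
          - g ω * l ω * (μ[fun ω' => D ω' * (1 - A ω')|m]) ω ∂μ := by
        rw [integral_sub ((hDA.integrable le_top).mul_of_top_right' h1)
            ((hDA'.integrable le_top).mul_of_top_right' h2),
          integral_sub (integrable_condExp.mul_of_top_right' h1)
            (integrable_condExp.mul_of_top_right' h2),
          integral_mul_condExp hm (by fun_prop) h1 (hDA.integrable le_top),
          integral_mul_condExp hm (by fun_prop) h2 (hDA'.integrable le_top)]
    _ = _ := by
        congr 1 with ω; ring

end CondExp

/-- The coefficient `fₜ` of the paper, for `m = F (t - 1)` and `A = dA t`: the regression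
coefficient of `D` on `A - μ[A|m]` given `m`. -/
noncomputable def censoringCoeff (μ : Measure Ω) (m : MeasurableSpace Ω) (D A : Ω → ℝ) :
    Ω → ℝ :=
  fun ω => (μ[fun ω' => D ω' * A ω'|m]) ω / (μ[A|m]) ω
    - (μ[fun ω' => D ω' * (1 - A ω')|m]) ω / (1 - (μ[A|m]) ω)

section CensoringCoeff

variable {D A : Ω → ℝ} {c : ℝ}

theorem stronglyMeasurable_censoringCoeff : StronglyMeasurable[m] (censoringCoeff μ m D A) := by
  have h1 : StronglyMeasurable[m] (μ[fun ω' => D ω' * A ω'|m]) := stronglyMeasurable_condExp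
  have h2 : StronglyMeasurable[m] (μ[fun ω' => D ω' * (1 - A ω')|m]) := stronglyMeasurable_condExp
  have h3 : StronglyMeasurable[m] (μ[A|m]) := stronglyMeasurable_condExp
  unfold censoringCoeff
  fun_prop

theorem censoringCoeff_mul {ω : Ω} (h0 : (μ[A|m]) ω ≠ 0) (h1 : 1 - (μ[A|m]) ω ≠ 0) :
    censoringCoeff μ m D A ω * ((μ[A|m]) ω * (1 - (μ[A|m]) ω))
      = (1 - (μ[A|m]) ω) * (μ[fun ω' => D ω' * A ω'|m]) ω
        - (μ[A|m]) ω * (μ[fun ω' => D ω' * (1 - A ω')|m]) ω := by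
  unfold censoringCoeff
  field_simp

variable [IsFiniteMeasure μ]

theorem memLp_top_censoringCoeff (hm : m ≤ mΩ) (hD : MemLp D ∞ μ) (hA : MemLp A ∞ μ)
    (hc : 0 < c) (hl : ∀ᵐ ω ∂μ, c ≤ (μ[A|m]) ω ∧ (μ[A|m]) ω ≤ 1 - c) :
    MemLp (censoringCoeff μ m D A) ∞ μ := by
  have hlm : AEStronglyMeasurable (μ[A|m]) μ :=
    (stronglyMeasurable_condExp.mono hm).aestronglyMeasurable
  have h1 := memLp_top_inv_of_le hlm hc (hl.mono fun ω h => h.1)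
  have h2 : MemLp (fun ω => (1 - (μ[A|m]) ω)⁻¹) ∞ μ :=
    memLp_top_inv_of_le (aestronglyMeasurable_const.sub hlm) hc
      (hl.mono fun ω h => by linarith [h.2])
  have ha : MemLp (μ[fun ω' => D ω' * A ω'|m]) ∞ μ := (hA.mul' hD).condExp le_top
  have hb : MemLp (μ[fun ω' => D ω' * (1 - A ω')|m]) ∞ μ :=
    (((memLp_const 1).sub hA).mul' hD).condExp le_top
  exact (h1.mul' ha).sub (h2.mul' hb)

theorem integral_mul_censoringCoeff_mul_sub_condExp (hm : m ≤ mΩ) (hD : MemLp D ∞ μ)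
    (hA : MemLp A ∞ μ) (hA01 : ∀ ω, A ω = 0 ∨ A ω = 1) (hc : 0 < c)
    (hl : ∀ᵐ ω ∂μ, c ≤ (μ[A|m]) ω ∧ (μ[A|m]) ω ≤ 1 - c) :
    ∫ ω, D ω * (censoringCoeff μ m D A ω * (A ω - (μ[A|m]) ω)) ∂μ
      = ∫ ω, (censoringCoeff μ m D A ω * (A ω - (μ[A|m]) ω)) ^ 2 ∂μ := by
  set f := censoringCoeff μ m D A
  set l := μ[A|m]
  have hf : StronglyMeasurable[m] f := stronglyMeasurable_censoringCoeff
  have hfb : MemLp f ∞ μ := memLp_top_censoringCoeff hm hD hA hc hl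
  have hff : MemLp (fun ω => f ω * f ω) ∞ μ := hfb.mul' hfb
  calc ∫ ω, D ω * (f ω * (A ω - l ω)) ∂μ = ∫ ω, f ω * (D ω * (A ω - l ω)) ∂μ := by
        congr 1 with ω; ring
    _ = ∫ ω, f ω * ((1 - l ω) * (μ[fun ω' => D ω' * A ω'|m]) ω
          - l ω * (μ[fun ω' => D ω' * (1 - A ω')|m]) ω) ∂μ :=
        integral_mul_mul_sub_condExp hm hf hfb hD hA
    _ = ∫ ω, f ω * f ω * (l ω * (1 - l ω)) ∂μ := by
        refine integral_congr_ae (hl.mono fun ω h => ?_)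
        dsimp only
        rw [mul_assoc, censoringCoeff_mul (hc.trans_le h.1).ne' (by linarith [h.2])]
    _ = ∫ ω, f ω * f ω * (A ω - l ω) ^ 2 ∂μ :=
        (integral_mul_sq_sub_condExp_of_zero_or_one hm (hf.mul hf) hff hA hA01).symm
    _ = ∫ ω, (f ω * (A ω - l ω)) ^ 2 ∂μ := by
        congr 1 with ω; ring

end CensoringCoeff

end

/-- Variance reduction from estimating/targeting the censoring mechanism: with
`S = Σ_t f_t·(dA t − λ t)` (the projection of `D` onto the censoring tangent space) and
`D** = D − S`, one has (i) `E[S] = 0` hence `E[D**] = E[D]`,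
(ii) `E[(D**)²] = E[D²] − E[S²]`, and consequently (iii) `Var(D**) ≤ Var(D)`. -/
theorem censoring_targeting_variance_reduction
    {Ω : Type*} {mF : MeasurableSpace Ω} (μ : Measure Ω) [IsProbabilityMeasure μ]
    (K : ℕ) (F : ℕ → MeasurableSpace Ω)
    (hF_mono : Monotone F) (hF_le : ∀ t, F t ≤ mF)
    (dA : ℕ → Ω → ℝ)
    (hdA_meas : ∀ t ∈ Finset.Icc 1 K, Measurable[F t] (dA t))
    (hdA01 : ∀ t ∈ Finset.Icc 1 K, ∀ ω, dA t ω = 0 ∨ dA t ω = 1)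
    (c : ℝ) (hc : 0 < c)
    (hlam : ∀ t ∈ Finset.Icc 1 K, ∀ᵐ ω ∂μ,
      c ≤ (μ[dA t | F (t - 1)]) ω ∧ (μ[dA t | F (t - 1)]) ω ≤ 1 - c)
    (D : Ω → ℝ) (hD_meas : Measurable D) (hD_bdd : ∃ C : ℝ, ∀ ω, |D ω| ≤ C)
    (f : ℕ → Ω → ℝ)
    (hf : ∀ t ∈ Finset.Icc 1 K, ∀ ω, f t ω =
      (μ[(fun ω' => D ω' * dA t ω') | F (t - 1)]) ω / (μ[dA t | F (t - 1)]) ω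
        - (μ[(fun ω' => D ω' * (1 - dA t ω')) | F (t - 1)]) ω
            / (1 - (μ[dA t | F (t - 1)]) ω))
    (S Dss : Ω → ℝ)
    (hS : ∀ ω, S ω = ∑ t ∈ Finset.Icc 1 K, f t ω * (dA t ω - (μ[dA t | F (t - 1)]) ω))
    (hDss : ∀ ω, Dss ω = D ω - S ω) :
    (∫ ω, S ω ∂μ = 0 ∧ ∫ ω, Dss ω ∂μ = ∫ ω, D ω ∂μ) ∧
    (∫ ω, (Dss ω) ^ 2 ∂μ = ∫ ω, (D ω) ^ 2 ∂μ - ∫ ω, (S ω) ^ 2 ∂μ) ∧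
    variance Dss μ ≤ variance D μ := by
  obtain ⟨C, hC⟩ := hD_bdd
  set T : ℕ → Ω → ℝ := fun t ω => f t ω * (dA t ω - (μ[dA t | F (t - 1)]) ω)
  have hDb : MemLp D ∞ μ :=
    memLp_top_of_bound hD_meas.aestronglyMeasurable C (.of_forall fun ω => hC ω)
  have hdAb : ∀ t ∈ Finset.Icc 1 K, MemLp (dA t) ∞ μ := fun t ht =>
    memLp_top_of_zero_or_one ((hdA_meas t ht).mono (hF_le t) le_rfl).aestronglyMeasurable
      (hdA01 t ht)
  have hf_eq : ∀ t ∈ Finset.Icc 1 K, f t = censoringCoeff μ (F (t - 1)) D (dA t) :=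
    fun t ht => funext (hf t ht)
  have hfm : ∀ t ∈ Finset.Icc 1 K, StronglyMeasurable[F (t - 1)] (f t) := fun t ht =>
    hf_eq t ht ▸ stronglyMeasurable_censoringCoeff
  have hfb : ∀ t ∈ Finset.Icc 1 K, MemLp (f t) ∞ μ := fun t ht =>
    hf_eq t ht ▸ memLp_top_censoringCoeff (hF_le _) hDb (hdAb t ht) hc (hlam t ht)
  have hT_mean : ∀ t ∈ Finset.Icc 1 K, ∫ ω, T t ω ∂μ = 0 := fun t ht =>
    integral_mul_sub_condExp_eq_zero (hF_le _) (hfm t ht) (hfb t ht)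
      ((hdAb t ht).integrable le_top)
  have hT_orth : ∀ t ∈ Finset.Icc 1 K, ∀ s ∈ Finset.Icc 1 K, t < s →
      ∫ ω, T t ω * T s ω ∂μ = 0 := fun t ht s hs hts =>
    integral_mul_sub_condExp_mul_mul_sub_condExp_eq_zero (hF_mono (by omega)) (hF_le _)
      (hfm t ht) ((hdA_meas t ht).stronglyMeasurable.mono (hF_mono (by omega))) (hfm s hs)
      (hfb t ht) (hdAb t ht) (hfb s hs) ((hdAb s hs).integrable le_top)
  have hT_proj : ∀ t ∈ Finset.Icc 1 K, ∫ ω, D ω * T t ω ∂μ = ∫ ω, T t ω ^ 2 ∂μ := fun t ht => by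
    simp only [T, hf_eq t ht]
    exact integral_mul_censoringCoeff_mul_sub_condExp (hF_le _) hDb (hdAb t ht) (hdA01 t ht) hc
      (hlam t ht)
  have hS_eq : S = fun ω => ∑ t ∈ Finset.Icc 1 K, T t ω := funext hS
  have hDss_eq : Dss = D - S := funext hDss
  have hD2 : MemLp D 2 μ := hDb.mono_exponent le_top
  have hT2 : ∀ t ∈ Finset.Icc 1 K, MemLp (T t) 2 μ := fun t ht =>
    (((hdAb t ht).sub ((hdAb t ht).condExp le_top)).mul' (r := ∞) (hfb t ht)).mono_exponent le_top
  have hS2 : MemLp S 2 μ := hS_eq ▸ memLp_finsetSum _ hT2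
  have hS0 : ∫ ω, S ω ∂μ = 0 := by
    rw [hS_eq, integral_finsetSum _ fun t ht => (hT2 t ht).integrable one_le_two]
    exact Finset.sum_eq_zero hT_mean
  have hDS : ∫ ω, D ω * S ω ∂μ = ∫ ω, S ω ^ 2 ∂μ :=
    hS_eq ▸ integral_mul_sum_eq_integral_sq_sum _ hD2 hT2 (fun t ht s hs hts =>
      hts.lt_or_gt.elim (hT_orth t ht s hs) fun h => by
        simpa only [mul_comm] using hT_orth s hs t ht h) hT_proj
  refine ⟨⟨hS0, ?_⟩, ?_, ?_⟩
  · rw [hDss_eq, integral_sub' (hD2.integrable one_le_two) (hS2.integrable one_le_two), hS0,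
      sub_zero]
  · simpa only [hDss_eq, Pi.sub_apply] using integral_sq_sub_eq_of_integral_mul_eq hD2 hS2 hDS
  · rw [hDss_eq, variance_sub_eq_of_integral_mul_eq hD2 hS2 hS0 hDS]
    linarith [integral_nonneg (μ := μ) (f := fun ω => S ω ^ 2) fun ω => sq_nonneg (S ω)]
end
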